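/- Let R be an involutive symmetry on ℂ^N (braid relation plus R² = I), let m, n be nonnegative integers, 𝒜 an associative unital ℂ-algebra, and C a fixed N×N complex matrix satisfying: (i) Tr_{R(2)} R₁₂ = I_N; (ii) Tr_R I_N = m − n; (iii) for every N×N matrix A over 𝒜, Tr_{R(2)}(R₁₂·A₁·R₁₂⁻¹) = (Tr_R A)·I_N = Tr_{R(2)}(R₁₂⁻¹·A₁·R₁₂) (note R⁻¹ = R). Set f(x) = 1/x, ℛ(x) = R + f(x)·I, and c = n − m. Suppose L assigns to each u ∈ ℂ an N×N matrix L(u) over 𝒜 such that for all u, v with u−v, v−u+c, u−v+c, v−u all ≠ 0: ℛ(u−v)·L₁(u)·ℛ(v−u+c)·L₁(v) = L₁(v)·ℛ(u−v+c)·L₁(u)·ℛ(v−u). Then for all such u, v: (Tr_R L(u))·L(v) = L(v)·(Tr_R L(u)). -/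

import Mathlib

/-!
Take the partial trace `Tr_{R(2)}` of the RS relation. Expanding `ℛ(x) = R + x⁻¹`, the term
`R L₁(u) R` traces to `Tr_R L(u)` by (iii) (using `R⁻¹ = R`), the terms with a single `R` trace
to `L(u)` by (i), and the term without `R` to `(m - n) L(u)` by (ii). On each side the
coefficient of the product of the two generators is `a⁻¹ + b⁻¹ + (m - n) a⁻¹ b⁻¹` with
`a + b = c`, which vanishes exactly at the critical charge `c = n - m`.
-/

open Matrix

/-- `op12 X = X ⊗ I_N` acting on `V ⊗ V ⊗ V`. -/
def op12 {N : ℕ} (X : Matrix (Fin N × Fin N) (Fin N × Fin N) ℂ) :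
    Matrix (Fin N × Fin N × Fin N) (Fin N × Fin N × Fin N) ℂ :=
  Matrix.of fun a b => X (a.1, a.2.1) (b.1, b.2.1) * (if a.2.2 = b.2.2 then 1 else 0)

/-- `op23 X = I_N ⊗ X` acting on `V ⊗ V ⊗ V`. -/
def op23 {N : ℕ} (X : Matrix (Fin N × Fin N) (Fin N × Fin N) ℂ) :
    Matrix (Fin N × Fin N × Fin N) (Fin N × Fin N × Fin N) ℂ :=
  Matrix.of fun a b => (if a.1 = b.1 then 1 else 0) * X (a.2.1, a.2.2) (b.2.1, b.2.2)

/-- For an `N×N` matrix `X` with entries in `A`, `leg1 X = X ⊗ I_N`. -/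
def leg1 {N : ℕ} {A : Type*} [Semiring A] (X : Matrix (Fin N) (Fin N) A) :
    Matrix (Fin N × Fin N) (Fin N × Fin N) A :=
  Matrix.of fun a b => X a.1 b.1 * (if a.2 = b.2 then 1 else 0)

/-- Embedding of a complex matrix into matrices over a `ℂ`-algebra `A`. -/
def emb {n : Type*} {A : Type*} [Semiring A] [Algebra ℂ A] (R : Matrix n n ℂ) :
    Matrix n n A :=
  R.map (algebraMap ℂ A)

/-- The `R`-trace: `Tr_R X = Σ_{i,j} C^i_j X^j_i`. -/
def trR {N : ℕ} {A : Type*} [Ring A] [Algebra ℂ A]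
    (C : Matrix (Fin N) (Fin N) ℂ) (X : Matrix (Fin N) (Fin N) A) : A :=
  ∑ i, ∑ j, C i j • X j i

/-- The partial `R`-trace over the second factor. -/
def trR2 {N : ℕ} {A : Type*} [Ring A] [Algebra ℂ A]
    (C : Matrix (Fin N) (Fin N) ℂ) (M : Matrix (Fin N × Fin N) (Fin N × Fin N) A) :
    Matrix (Fin N) (Fin N) A :=
  Matrix.of fun r s => ∑ a, ∑ b, C a b • M (r, b) (s, a)

section PartialTrace

variable {N : ℕ} {A : Type*} [Ring A] [Algebra ℂ A] (C : Matrix (Fin N) (Fin N) ℂ)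

omit [Algebra ℂ A] in
lemma leg1_mul (X Y : Matrix (Fin N) (Fin N) A) : leg1 (X * Y) = leg1 X * leg1 Y := by
  ext a b
  simp [leg1, mul_apply, Fintype.sum_prod_type, mul_ite, ite_mul]

lemma emb_add_smul_one (M : Matrix (Fin N × Fin N) (Fin N × Fin N) ℂ) (x : ℂ) :
    (emb (M + x • 1) : Matrix _ _ A) = emb M + x • 1 := by
  ext a b
  by_cases h : a = b <;>
    simp [emb, one_apply, h, Algebra.algebraMap_eq_smul_one, add_smul]

lemma trR2_add (M M' : Matrix (Fin N × Fin N) (Fin N × Fin N) A) :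
    trR2 C (M + M') = trR2 C M + trR2 C M' := by
  ext r s
  simp [trR2, Finset.sum_add_distrib]

lemma trR2_smul (x : ℂ) (M : Matrix (Fin N × Fin N) (Fin N × Fin N) A) :
    trR2 C (x • M) = x • trR2 C M := by
  ext r s
  simp [trR2, Finset.smul_sum, smul_comm x]

lemma trR2_mul_leg1 (M : Matrix (Fin N × Fin N) (Fin N × Fin N) A)
    (X : Matrix (Fin N) (Fin N) A) :
    trR2 C (M * leg1 X) = trR2 C M * X := by
  ext r s
  simp only [trR2, leg1, mul_apply, of_apply, Fintype.sum_prod_type, mul_ite, mul_one, mul_zero,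
    Finset.sum_ite_eq', Finset.mem_univ, if_true, Finset.smul_sum, Finset.sum_mul,
    smul_mul_assoc]
  conv_rhs => rw [Finset.sum_comm]
  exact Finset.sum_congr rfl fun _ _ => Finset.sum_comm

lemma trR2_leg1_mul (M : Matrix (Fin N × Fin N) (Fin N × Fin N) A)
    (X : Matrix (Fin N) (Fin N) A) :
    trR2 C (leg1 X * M) = X * trR2 C M := by
  ext r s
  simp only [trR2, leg1, mul_apply, of_apply, Fintype.sum_prod_type, mul_ite, ite_mul, mul_one,
    mul_zero, zero_mul, Finset.sum_ite_eq, Finset.mem_univ, if_true, Finset.smul_sum,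
    Finset.mul_sum, mul_smul_comm]
  conv_rhs => rw [Finset.sum_comm]
  exact Finset.sum_congr rfl fun _ _ => Finset.sum_comm

lemma trR2_leg1 (X : Matrix (Fin N) (Fin N) A) :
    trR2 C (leg1 X) = trR C (1 : Matrix (Fin N) (Fin N) ℂ) • X := by
  ext r s
  simp [trR2, trR, leg1, one_apply, Finset.sum_smul]

lemma trR2_emb (M : Matrix (Fin N × Fin N) (Fin N × Fin N) ℂ) :
    trR2 C (emb M : Matrix _ _ A) = emb (trR2 C M) := by
  ext r s
  simp [trR2, emb, Algebra.smul_def]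

lemma trR2_emb_eq_one {R : Matrix (Fin N × Fin N) (Fin N × Fin N) ℂ}
    (hR : trR2 C R = 1) : trR2 C (emb R : Matrix _ _ A) = 1 := by
  rw [trR2_emb, hR]
  exact Matrix.map_one _ (map_zero _) (map_one _)

lemma trR2_sandwich {R : Matrix (Fin N × Fin N) (Fin N × Fin N) ℂ} (hR : trR2 C R = 1)
    {X : Matrix (Fin N) (Fin N) A}
    (hX : trR2 C (emb R * leg1 X * emb R) = trR C X • (1 : Matrix (Fin N) (Fin N) A))
    (x y : ℂ) :
    trR2 C (emb (R + x • 1) * leg1 X * emb (R + y • 1)) =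
      trR C X • 1 + (x + y + x * y * trR C (1 : Matrix (Fin N) (Fin N) ℂ)) • X := by
  have hRX : trR2 C (emb R * leg1 X) = X := by
    rw [trR2_mul_leg1, trR2_emb_eq_one C hR, one_mul]
  have hXR : trR2 C (leg1 X * emb R) = X := by
    rw [trR2_leg1_mul, trR2_emb_eq_one C hR, mul_one]
  simp only [emb_add_smul_one, add_mul, mul_add, smul_mul_assoc, mul_smul_comm, one_mul,
    mul_one, smul_smul, trR2_add, trR2_smul, hX, hRX, hXR, trR2_leg1]
  simp only [add_smul, mul_smul]
  rw [smul_add, smul_comm y x]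
  abel

end PartialTrace

lemma inv_add_inv_add_inv_mul_inv_mul_eq_zero {K : Type*} [Field K] {a b t : K}
    (ha : a ≠ 0) (hb : b ≠ 0) (h : a + b + t = 0) : a⁻¹ + b⁻¹ + a⁻¹ * b⁻¹ * t = 0 := by
  field_simp
  linear_combination h

theorem first_power_sum_central_rational_RS_general
    {N : ℕ} {A : Type*} [Ring A] [Algebra ℂ A]
    (m n : ℕ)
    (R : Matrix (Fin N × Fin N) (Fin N × Fin N) ℂ)
    (hinvol : R * R = 1)
    (C : Matrix (Fin N) (Fin N) ℂ)
    (hi : trR2 C R = (1 : Matrix (Fin N) (Fin N) ℂ))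
    (hii : trR C (1 : Matrix (Fin N) (Fin N) ℂ) = (m : ℂ) - n)
    (hiii1 : ∀ X : Matrix (Fin N) (Fin N) A,
      trR2 C (emb R * leg1 X * emb R⁻¹) = trR C X • (1 : Matrix (Fin N) (Fin N) A))
    (c : ℂ) (hcrit : c = (n : ℂ) - m)
    (L : ℂ → Matrix (Fin N) (Fin N) A)
    (hRS : ∀ u v : ℂ, u - v ≠ 0 → v - u + c ≠ 0 → u - v + c ≠ 0 → v - u ≠ 0 →
      emb (R + (u - v)⁻¹ • (1 : Matrix (Fin N × Fin N) (Fin N × Fin N) ℂ)) *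
          leg1 (L u) *
          emb (R + (v - u + c)⁻¹ • (1 : Matrix (Fin N × Fin N) (Fin N × Fin N) ℂ)) *
          leg1 (L v) =
        leg1 (L v) *
          emb (R + (u - v + c)⁻¹ • (1 : Matrix (Fin N × Fin N) (Fin N × Fin N) ℂ)) *
          leg1 (L u) *
          emb (R + (v - u)⁻¹ • (1 : Matrix (Fin N × Fin N) (Fin N × Fin N) ℂ)))
    (u v : ℂ) (h1 : u - v ≠ 0) (h2 : v - u + c ≠ 0) (h3 : u - v + c ≠ 0) (h4 : v - u ≠ 0) :
    trR C (L u) • L v = L v * (trR C (L u) • (1 : Matrix (Fin N) (Fin N) A)) := by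
  have hconj : trR2 C (emb R * leg1 (L u) * emb R) = trR C (L u) • 1 := by
    simpa only [Matrix.inv_eq_right_inv hinvol] using hiii1 (L u)
  have hlhs := inv_add_inv_add_inv_mul_inv_mul_eq_zero h1 h2
    (by rw [hii, hcrit]; ring : u - v + (v - u + c) + trR C 1 = 0)
  have hrhs := inv_add_inv_add_inv_mul_inv_mul_eq_zero h3 h4
    (by rw [hii, hcrit]; ring : u - v + c + (v - u) + trR C 1 = 0)
  have key := congrArg (trR2 C) (hRS u v h1 h2 h3 h4)
  rwa [mul_assoc (leg1 (L v) * _), mul_assoc (leg1 (L v)), ← mul_assoc (emb _), trR2_mul_leg1,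
    trR2_leg1_mul, trR2_sandwich C hi hconj, trR2_sandwich C hi hconj, hlhs, hrhs, zero_smul,
    add_zero, smul_mul_assoc, one_mul] at key

/-- in the rational RS-type algebra (built from an involutive symmetry,
with shift `f(x) = 1/x` and additive charge) at the critical charge `c = n − m`, the
first quantum power sum `Tr_R L(u)` commutes with all generators `L(v)`. -/
theorem first_power_sum_central_rational_RS
    {N : ℕ} {A : Type*} [Ring A] [Algebra ℂ A]
    (m n : ℕ)
    (R : Matrix (Fin N × Fin N) (Fin N × Fin N) ℂ)
    (hRinv : IsUnit R)
    (hbraid : op12 R * op23 R * op12 R = op23 R * op12 R * op23 R)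
    (hinvol : R * R = 1)
    (C : Matrix (Fin N) (Fin N) ℂ)
    (hi : trR2 C R = (1 : Matrix (Fin N) (Fin N) ℂ))
    (hii : trR C (1 : Matrix (Fin N) (Fin N) ℂ) = (m : ℂ) - n)
    (hiii1 : ∀ X : Matrix (Fin N) (Fin N) A,
      trR2 C (emb R * leg1 X * emb R⁻¹) = trR C X • (1 : Matrix (Fin N) (Fin N) A))
    (hiii2 : ∀ X : Matrix (Fin N) (Fin N) A,
      trR2 C (emb R⁻¹ * leg1 X * emb R) = trR C X • (1 : Matrix (Fin N) (Fin N) A))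
    (c : ℂ) (hcrit : c = (n : ℂ) - m)
    (L : ℂ → Matrix (Fin N) (Fin N) A)
    (hRS : ∀ u v : ℂ, u - v ≠ 0 → v - u + c ≠ 0 → u - v + c ≠ 0 → v - u ≠ 0 →
      emb (R + (u - v)⁻¹ • (1 : Matrix (Fin N × Fin N) (Fin N × Fin N) ℂ)) *
          leg1 (L u) *
          emb (R + (v - u + c)⁻¹ • (1 : Matrix (Fin N × Fin N) (Fin N × Fin N) ℂ)) *
          leg1 (L v) =
        leg1 (L v) *
          emb (R + (u - v + c)⁻¹ • (1 : Matrix (Fin N × Fin N) (Fin N × Fin N) ℂ)) *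
          leg1 (L u) *
          emb (R + (v - u)⁻¹ • (1 : Matrix (Fin N × Fin N) (Fin N × Fin N) ℂ)))
    (u v : ℂ) (h1 : u - v ≠ 0) (h2 : v - u + c ≠ 0) (h3 : u - v + c ≠ 0) (h4 : v - u ≠ 0) :
    trR C (L u) • L v = L v * (trR C (L u) • (1 : Matrix (Fin N) (Fin N) A)) :=
  first_power_sum_central_rational_RS_general m n R hinvol C hi hii hiii1 c hcrit L hRS u v h1 h2 h3
    h4
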